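/- Let λ be an unbroken doubly-singular partition that is a 2p-core for a prime p. Then λ_1 ≤ 4p - 6 and λ'_1 ≤ 4p - 6. -/

import Mathlib

/-- A partition: weakly decreasing sequence of non-negative integers (indexed from 1,
with the convention `μ 0 = 0`), with finitely many nonzero terms. -/
def IsPartition (μ : ℕ → ℕ) : Prop :=
  μ 0 = 0 ∧ (∀ i, 1 ≤ i → μ (i + 1) ≤ μ i) ∧ ∃ N, ∀ i, N ≤ i → μ i = 0

/-- The conjugate partition: `conj μ j = |{i ≥ 1 : μ i ≥ j}|`. -/
noncomputable def conj (μ : ℕ → ℕ) (j : ℕ) : ℕ :=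
  Nat.card {i : ℕ // 1 ≤ i ∧ j ≤ μ i}

/-- `(i,j)` is a node of the Young diagram of `μ`. -/
def IsNode (μ : ℕ → ℕ) (i j : ℕ) : Prop := 1 ≤ i ∧ 1 ≤ j ∧ j ≤ μ i

/-- The hook length `h_μ(i,j) = 1 + μ_i - j + μ'_j - i` (as an integer). -/
noncomputable def hook (μ : ℕ → ℕ) (i j : ℕ) : ℤ :=
  1 + (μ i : ℤ) - (j : ℤ) + (conj μ j : ℤ) - (i : ℤ)

/-- `μ` is broken: there exist `1 < c < d` with `μ_{c-1} - μ_c > 1` and `μ_{d-1} = μ_d > 0`. -/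
def Broken (μ : ℕ → ℕ) : Prop :=
  ∃ c d : ℕ, 1 < c ∧ c < d ∧ μ c + 1 < μ (c - 1) ∧ μ (d - 1) = μ d ∧ 0 < μ d

/-- `μ` is 2-singular: some `μ_i = μ_{i+1} > 0` (with `i ≥ 1`). -/
def TwoSingular (μ : ℕ → ℕ) : Prop := ∃ i : ℕ, 1 ≤ i ∧ μ i = μ (i + 1) ∧ 0 < μ i

/-- `μ` is an `e`-core: no hook length is divisible by `e`. -/
def IsECore (e : ℕ) (μ : ℕ → ℕ) : Prop :=
  ∀ i j : ℕ, IsNode μ i j → ¬ (e : ℤ) ∣ hook μ i j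

/-- `μ` is an `e`-JM partition. -/
def IsJM (e : ℕ) (μ : ℕ → ℕ) : Prop :=
  ∀ i j : ℕ, IsNode μ i j → (e : ℤ) ∣ hook μ i j →
    (∀ k, 1 ≤ k → k ≤ μ i → (e : ℤ) ∣ hook μ i k) ∨
    (∀ k, 1 ≤ k → k ≤ conj μ j → (e : ℤ) ∣ hook μ k j)

/-!
Encode `μ` by its beta-set `B = {μ_k + μ'_1 - k}` of first-column hook lengths, so that
`|B| = μ'_1` and `max B = μ_1 + μ'_1 - 1`. For a bead `b` and a smaller gap `c`, `b - c` is a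
hook length, so for a `2p`-core `B` is closed under `b ↦ b - 2p` and contains no multiple of `2p`;
in particular its lowest pair of adjacent beads lies below `2p`. Repeated parts of `μ` give
adjacent beads, repeated parts of `μ'` give a double gap below a bead, and unbrokenness puts every
such double gap below every pair of adjacent beads. Shifting a double gap up by `2p` gives another
one, which therefore lies above all beads; so below `max B - 2p + 2` there are neither adjacent
beads nor double gaps. Counting beads in pairs on the intervals cut out by `max B - 2p + 2` and
`2p` gives `|B| ≤ 2p - 2` and `max B + 1 - |B| ≤ 2p - 2`, i.e. `μ'_1, μ_1 ≤ 2p - 2 ≤ 4p - 6`.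
-/

open Finset

theorem card_le_of_subset_Ico_of_add_one_notMem {S : Finset ℕ} {a n : ℕ}
    (hS : S ⊆ Ico a (a + n)) (h : ∀ y ∈ S, y + 1 ∉ S) : #S ≤ (n + 1) / 2 := by
  have hmaps : Set.MapsTo (fun y => (y - a) / 2) S (range ((n + 1) / 2)) := fun y hy => by
    have := mem_Ico.1 (hS hy)
    simp only [coe_range, Set.mem_Iio]
    omega
  have hinj : Set.InjOn (fun y => (y - a) / 2) S := fun y hy y' hy' hyy' => by
    have := mem_Ico.1 (hS hy)
    have := mem_Ico.1 (hS hy')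
    simp only at hyy'
    by_contra hne
    rcases (show y + 1 = y' ∨ y' + 1 = y by omega) with rfl | rfl
    · exact h y hy hy'
    · exact h y' hy' hy
  simpa using card_le_card_of_injOn _ hmaps hinj

theorem le_card_Ico_inter_of_mem_or_add_one_mem {B : Finset ℕ} {a n : ℕ}
    (h : ∀ y, a ≤ y → y + 1 < a + n → y ∈ B ∨ y + 1 ∈ B) : n / 2 ≤ #(Ico a (a + n) ∩ B) := by
  have hgaps := card_le_of_subset_Ico_of_add_one_notMem (S := Ico a (a + n) \ B) sdiff_subset
    fun y hy hy1 => by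
      simp only [mem_sdiff, mem_Ico] at hy hy1
      rcases h y hy.1.1 (by omega) with hy' | hy' <;> tauto
  have := card_sdiff_add_card_inter (Ico a (a + n)) B
  rw [Nat.card_Ico, Nat.add_sub_cancel_left] at this
  omega

theorem card_eq_card_Ico_inter_add_add (B : Finset ℕ) {b c M : ℕ} (hbc : b ≤ c)
    (hcM : c ≤ M + 1) (hM : ∀ y ∈ B, y ≤ M) :
    #B = #(Ico 0 b ∩ B) + #(Ico b c ∩ B) + #(Ico c (M + 1) ∩ B) := by
  have hsplit : ∀ {a b c : ℕ}, a ≤ b → b ≤ c →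
      #(Ico a b ∩ B) + #(Ico b c ∩ B) = #(Ico a c ∩ B) := fun hab hbc => by
    rw [← Ico_union_Ico_eq_Ico hab hbc, union_inter_distrib_right, card_union_of_disjoint]
    exact (Ico_disjoint_Ico_consecutive _ _ _).mono inter_subset_left inter_subset_left
  rw [hsplit (Nat.zero_le b) hbc, hsplit (Nat.zero_le c) hcM,
    inter_eq_right.2 fun y hy => mem_Ico.2 ⟨Nat.zero_le y, Nat.lt_succ_of_le (hM y hy)⟩]

def IsCoreBetaSet (e : ℕ) (B : Finset ℕ) : Prop := ∀ b ∈ B, ∀ c < b, c ∉ B → ¬ e ∣ b - c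

def BetaUnbroken (B : Finset ℕ) : Prop :=
  ∀ x z w, x ∈ B → x + 1 ∈ B → z ∉ B → z + 1 ∉ B → w ∈ B → z + 1 < w → z + 1 < x

namespace IsCoreBetaSet

variable {B : Finset ℕ} {e s z w M : ℕ}

theorem sub_mem (hB : IsCoreBetaSet e B) (he : 0 < e) {b : ℕ} (hb : b ∈ B) (heb : e ≤ b) :
    b - e ∈ B := by
  by_contra h
  exact hB b hb (b - e) (by omega) h (by rw [Nat.sub_sub_self heb])

theorem add_notMem (hB : IsCoreBetaSet e B) (he : 0 < e) {z : ℕ} (hz : z ∉ B) : z + e ∉ B :=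
  fun h => hz (by simpa using hB.sub_mem he h (Nat.le_add_left e z))

theorem not_dvd (hB : IsCoreBetaSet e B) (h0 : 0 ∉ B) {b : ℕ} (hb : b ∈ B) : ¬ e ∣ b := by
  have hb0 : 0 < b := Nat.pos_of_ne_zero fun h => h0 (h ▸ hb)
  simpa using hB b hb 0 hb0 h0

theorem card_Ico_add_inter_le (hB : IsCoreBetaSet e B) (he : 0 < e) (a b : ℕ) :
    #(Ico (a + e) (b + e) ∩ B) ≤ #(Ico a b ∩ B) := by
  refine card_le_card_of_injOn (· - e) (fun y hy => ?_) (fun y hy y' hy' h => ?_)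
  · simp only [coe_inter, Set.mem_inter_iff, mem_coe, mem_Ico] at hy ⊢
    exact ⟨by omega, hB.sub_mem he hy.2 (by omega)⟩
  · simp only [coe_inter, Set.mem_inter_iff, mem_coe, mem_Ico] at hy hy' h
    omega

theorem exists_adjacent_add_two_le (hB : IsCoreBetaSet e B) (he : 0 < e) (h0 : 0 ∉ B)
    (hpair : ∃ x, x ∈ B ∧ x + 1 ∈ B) : ∃ s, s ∈ B ∧ s + 1 ∈ B ∧ s + 2 ≤ e := by
  classical
  obtain ⟨hs, hs1⟩ := Nat.find_spec hpair
  refine ⟨_, hs, hs1, ?_⟩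
  have hlt : Nat.find hpair < e := by
    by_contra! h
    refine Nat.find_min hpair (m := Nat.find hpair - e) (by omega) ⟨hB.sub_mem he hs h, ?_⟩
    rw [← Nat.sub_add_comm h]
    exact hB.sub_mem he hs1 (by omega)
  have hne : Nat.find hpair + 1 ≠ e := fun h => hB.not_dvd h0 hs1 (h ▸ dvd_rfl)
  omega

theorem lt_add_of_double_gap (hB : IsCoreBetaSet e B) (he : 0 < e) (hunb : BetaUnbroken B)
    (hs : s ∈ B) (hs1 : s + 1 ∈ B) (hse : s + 2 ≤ e) {z w : ℕ} (hz : z ∉ B) (hz1 : z + 1 ∉ B)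
    (hw : w ∈ B) : w < z + e := by
  have hze : z + e ∉ B := hB.add_notMem he hz
  have hze1 : z + e + 1 ∉ B := by simpa [add_right_comm] using hB.add_notMem he hz1
  by_contra! h
  have : w ≠ z + e := fun h' => hze (h' ▸ hw)
  have : w ≠ z + e + 1 := fun h' => hze1 (h' ▸ hw)
  have := hunb s (z + e) w hs hs1 hze hze1 hw (by omega)
  omega

theorem card_le_of_lt_max (hB : IsCoreBetaSet e B) (he : 0 < e) (h0 : 0 ∉ B)
    (hunb : BetaUnbroken B) (hs : s ∈ B) (hs1 : s + 1 ∈ B) (hse : s + 2 ≤ e) (hz : z ∉ B)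
    (hz1 : z + 1 ∉ B) (hw : w ∈ B) (hzw : z + 1 < w) (hM : M ∈ B) (hMmax : ∀ b ∈ B, b ≤ M)
    (heM : e < M) : #B ≤ e - 2 := by
  -- `[1, M - e + 2)` has no adjacent beads, `[M - e + 2, e)` misses `z + 1`,
  -- and `[e, M]` has at most as many beads as its translate `[0, M - e]`
  have hzM := hB.lt_add_of_double_gap he hunb hs hs1 hse hz hz1 hM
  have hzs := hunb s z w hs hs1 hz hz1 hw hzw
  have hadj : ∀ y ∈ B, y + 1 ∈ B → M - e + 2 < y := fun y hy hy1 => by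
    have := hunb y z w hy hy1 hz hz1 hw hzw
    omega
  have hlow : ∀ n ≤ M - e + 1, #(Ico 0 (n + 1) ∩ B) ≤ (n + 1) / 2 := fun n hn => by
    refine card_le_of_subset_Ico_of_add_one_notMem (a := 1) (fun y hy => ?_) fun y hy hy1 => ?_
    · obtain ⟨hyI, hyB⟩ := mem_inter.1 hy
      have : y ≠ 0 := fun h => h0 (h ▸ hyB)
      simp only [mem_Ico] at hyI ⊢
      omega
    · have := hadj y (mem_inter.1 hy).2 (mem_inter.1 hy1).2
      simp only [mem_inter, mem_Ico] at hy
      omega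
  have hmid : #(Ico (M - e + 2) e ∩ B) ≤ e - (M - e + 2) - 1 := by
    have hsub : Ico (M - e + 2) e ∩ B ⊆ (Ico (M - e + 2) e).erase (z + 1) :=
      fun y hy => mem_erase.2 ⟨fun h => hz1 (h ▸ (mem_inter.1 hy).2), (mem_inter.1 hy).1⟩
    have := card_le_card hsub
    rwa [card_erase_of_mem (mem_Ico.2 (by omega)), Nat.card_Ico] at this
  have hhigh : #(Ico e (M + 1) ∩ B) ≤ (M - e + 1) / 2 := calc
    #(Ico e (M + 1) ∩ B) = #(Ico (0 + e) (M - e + 1 + e) ∩ B) := by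
      rw [Nat.zero_add, show M - e + 1 + e = M + 1 by omega]
    _ ≤ #(Ico 0 (M - e + 1) ∩ B) := hB.card_Ico_add_inter_le he 0 _
    _ ≤ (M - e + 1) / 2 := hlow (M - e) (Nat.le_succ _)
  have : #(Ico 0 (M - e + 2) ∩ B) ≤ (M - e + 2) / 2 := hlow (M - e + 1) le_rfl
  rw [card_eq_card_Ico_inter_add_add B (show M - e + 2 ≤ e by omega) (by omega) hMmax]
  omega

theorem sub_add_three_le_card_of_lt_max (hB : IsCoreBetaSet e B) (he : 0 < e)
    (hunb : BetaUnbroken B) (hs : s ∈ B) (hs1 : s + 1 ∈ B) (hse : s + 2 ≤ e) (hz : z ∉ B)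
    (hz1 : z + 1 ∉ B) (hw : w ∈ B) (hzw : z + 1 < w) (hM : M ∈ B) (hMmax : ∀ b ∈ B, b ≤ M)
    (heM : e < M) : M - e + 3 ≤ #B := by
  -- `[0, M - e + 2)` and `[e, M]` have no double gaps, and `s, s + 1` lie in between
  have hgap : ∀ y, y ∉ B → y + 1 ∉ B → M < y + e := fun y hy hy1 =>
    hB.lt_add_of_double_gap he hunb hs hs1 hse hy hy1 hM
  have hzM := hgap z hz hz1
  have hzs := hunb s z w hs hs1 hz hz1 hw hzw
  have hlow : (M - e + 2) / 2 ≤ #(Ico 0 (0 + (M - e + 2)) ∩ B) :=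
    le_card_Ico_inter_of_mem_or_add_one_mem fun y _ hy => by
      by_contra! h
      have := hgap y h.1 h.2
      omega
  have hmid : 2 ≤ #(Ico (M - e + 2) e ∩ B) := by
    have hsub : {s, s + 1} ⊆ Ico (M - e + 2) e ∩ B := by
      intro y hy
      rcases mem_insert.1 hy with rfl | hy
      · exact mem_inter.2 ⟨mem_Ico.2 (by omega), hs⟩
      · rw [mem_singleton.1 hy]
        exact mem_inter.2 ⟨mem_Ico.2 (by omega), hs1⟩
    simpa using card_le_card hsub
  have hhigh : (M - e + 1) / 2 ≤ #(Ico e (e + (M - e + 1)) ∩ B) :=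
    le_card_Ico_inter_of_mem_or_add_one_mem fun y hy hyM => by
      by_contra! h
      have hyM' : y + 1 ≠ M := fun h' => h.2 (h' ▸ hM)
      have := hunb s y M hs hs1 h.1 h.2 hM (by omega)
      omega
  rw [card_eq_card_Ico_inter_add_add B (show M - e + 2 ≤ e by omega) (by omega) hMmax]
  rw [Nat.zero_add] at hlow
  rw [show e + (M - e + 1) = M + 1 by omega] at hhigh
  omega

theorem card_le_and_add_one_le (hB : IsCoreBetaSet e B) (he : 0 < e) (h0 : 0 ∉ B)
    (hunb : BetaUnbroken B) (hpair : ∃ x, x ∈ B ∧ x + 1 ∈ B)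
    (hgap : ∃ z w, z ∉ B ∧ z + 1 ∉ B ∧ w ∈ B ∧ z + 1 < w) :
    #B ≤ e - 2 ∧ ∀ b ∈ B, b + 1 ≤ e - 2 + #B := by
  obtain ⟨s, hs, hs1, hse⟩ := hB.exists_adjacent_add_two_le he h0 hpair
  obtain ⟨z, w, hz, hz1, hw, hzw⟩ := hgap
  have hM : B.max' ⟨s, hs⟩ ∈ B := max'_mem _ _
  have hMmax : ∀ b ∈ B, b ≤ B.max' ⟨s, hs⟩ := fun b hb => le_max' B b hb
  rcases lt_trichotomy (B.max' ⟨s, hs⟩) e with hMe | hMe | hMe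
  · have hzs := hunb s z w hs hs1 hz hz1 hw hzw
    have hsub : B ⊆ (Ico 1 e).erase (z + 1) := fun b hb => mem_erase.2
      ⟨fun h => hz1 (h ▸ hb), mem_Ico.2 ⟨Nat.pos_of_ne_zero fun h => h0 (h ▸ hb),
        (hMmax b hb).trans_lt hMe⟩⟩
    have hcard := card_le_card hsub
    rw [card_erase_of_mem (mem_Ico.2 (by omega)), Nat.card_Ico] at hcard
    have htwo : #{s, s + 1} ≤ #B := card_le_card (insert_subset hs (singleton_subset_iff.2 hs1))
    rw [card_pair (by omega)] at htwo
    exact ⟨by omega, fun b hb => by have := hMmax b hb; omega⟩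
  · exact absurd dvd_rfl (hMe ▸ hB.not_dvd h0 hM)
  · refine ⟨hB.card_le_of_lt_max he h0 hunb hs hs1 hse hz hz1 hw hzw hM hMmax hMe,
      fun b hb => ?_⟩
    have := hB.sub_add_three_le_card_of_lt_max he hunb hs hs1 hse hz hz1 hw hzw hM hMmax hMe
    have := hMmax b hb
    omega

end IsCoreBetaSet

namespace IsPartition

variable {μ : ℕ → ℕ}

theorem antitone (hμ : IsPartition μ) {i j : ℕ} (hi : 1 ≤ i) (hij : i ≤ j) : μ j ≤ μ i := by
  induction j, hij using Nat.le_induction with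
  | base => exact le_rfl
  | succ n hin ih => exact (hμ.2.1 n (hi.trans hin)).trans ih

theorem le_conj_iff (hμ : IsPartition μ) {j k : ℕ} (hj : 1 ≤ j) (hk : 1 ≤ k) :
    k ≤ conj μ j ↔ j ≤ μ k := by
  obtain ⟨N, hN⟩ := hμ.2.2
  have hconj : conj μ j = {i | 1 ≤ i ∧ j ≤ μ i}.ncard := Nat.card_coe_set_eq _
  rw [hconj]
  constructor
  · intro h
    by_contra! hjk
    have hsub : {i | 1 ≤ i ∧ j ≤ μ i} ⊆ Set.Ico 1 k := fun i ⟨hi, hji⟩ =>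
      ⟨hi, by by_contra! hki; have := hμ.antitone hk hki; omega⟩
    have := Set.ncard_le_ncard hsub (Set.finite_Ico 1 k)
    rw [Set.ncard_Ico_nat] at this
    omega
  · intro h
    have hfin : {i | 1 ≤ i ∧ j ≤ μ i}.Finite := (Set.finite_Iio N).subset fun i ⟨_, hji⟩ => by
      by_contra hNi; have := hN i (not_lt.1 hNi); omega
    have hsub : Set.Icc 1 k ⊆ {i | 1 ≤ i ∧ j ≤ μ i} := fun i ⟨hi, hik⟩ =>
      ⟨hi, h.trans (hμ.antitone hi hik)⟩
    have := Set.ncard_le_ncard hsub hfin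
    rwa [Set.ncard_Icc_nat, Nat.add_sub_cancel] at this

theorem conj_antitone (hμ : IsPartition μ) {j j' : ℕ} (hj : 1 ≤ j) (hjj' : j ≤ j') :
    conj μ j' ≤ conj μ j := by
  rcases Nat.eq_zero_or_pos (conj μ j') with h | h
  · omega
  · have := (hμ.le_conj_iff (hj.trans hjj') h).1 le_rfl
    exact (hμ.le_conj_iff hj h).2 (hjj'.trans this)

theorem conj_eq (hμ : IsPartition μ) {i j : ℕ} (hi : 1 ≤ i) (hj : 1 ≤ j) (hji : j ≤ μ i)
    (hlt : μ (i + 1) < j) : conj μ j = i := by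
  have := (hμ.le_conj_iff hj hi).2 hji
  have := (hμ.le_conj_iff hj (Nat.le_add_left 1 i)).not.2 (by omega)
  omega

theorem eq_zero_of_conj_one_lt (hμ : IsPartition μ) {k : ℕ} (hk : conj μ 1 < k) : μ k = 0 := by
  have := (hμ.le_conj_iff le_rfl (show 1 ≤ k by omega)).not.1 (by omega)
  omega

end IsPartition

/-- The first-column hook length `h_μ(k, 1)`. -/
noncomputable def beta (μ : ℕ → ℕ) (k : ℕ) : ℕ := μ k + (conj μ 1 - k)

noncomputable def betaSet (μ : ℕ → ℕ) : Finset ℕ := (Icc 1 (conj μ 1)).image (beta μ)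

theorem mem_betaSet {μ : ℕ → ℕ} {b : ℕ} :
    b ∈ betaSet μ ↔ ∃ k, 1 ≤ k ∧ k ≤ conj μ 1 ∧ beta μ k = b := by
  simp only [betaSet, mem_image, mem_Icc, and_assoc]

theorem beta_mem_betaSet {μ : ℕ → ℕ} {k : ℕ} (hk : 1 ≤ k) (hkr : k ≤ conj μ 1) :
    beta μ k ∈ betaSet μ :=
  mem_betaSet.2 ⟨k, hk, hkr, rfl⟩

namespace IsPartition

variable {μ : ℕ → ℕ}

theorem beta_strictAntiOn (hμ : IsPartition μ) :
    StrictAntiOn (beta μ) (Set.Icc 1 (conj μ 1)) := by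
  intro k ⟨hk, _⟩ k' ⟨_, hk'⟩ hkk'
  have := hμ.antitone hk hkk'.le
  unfold beta
  omega

theorem card_betaSet (hμ : IsPartition μ) : #(betaSet μ) = conj μ 1 := by
  rw [betaSet, card_image_of_injOn (by simpa using hμ.beta_strictAntiOn.injOn), Nat.card_Icc,
    Nat.add_sub_cancel]

theorem zero_notMem_betaSet (hμ : IsPartition μ) : 0 ∉ betaSet μ := by
  rw [mem_betaSet]
  rintro ⟨k, hk, hkr, hk0⟩
  have := (hμ.le_conj_iff le_rfl hk).1 hkr
  unfold beta at hk0
  omega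

/-- `c` lies strictly between `β_a` and `β_{a+1}`; the last conjunct is `β_{a+1} < c` stated
without truncated subtraction, reading `β_{μ'_1 + 1}` as `-1`. -/
theorem exists_beta_gt_of_notMem (hμ : IsPartition μ) {b c : ℕ}
    (hb : b ∈ betaSet μ) (hcb : c < b) (hc : c ∉ betaSet μ) :
    ∃ a, 1 ≤ a ∧ a ≤ conj μ 1 ∧ c < beta μ a ∧ μ (a + 1) + conj μ 1 ≤ c + a := by
  classical
  obtain ⟨k, hk, hkr, rfl⟩ := mem_betaSet.1 hb
  set a := Nat.findGreatest (fun i => c < beta μ i) (conj μ 1)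
  have hka : k ≤ a := Nat.le_findGreatest hkr hcb
  have har : a ≤ conj μ 1 := Nat.findGreatest_le _
  refine ⟨a, hk.trans hka, har, Nat.findGreatest_spec (P := fun i => c < beta μ i) hkr hcb, ?_⟩
  rcases har.lt_or_eq with har | har
  · have hle := not_lt.1 <|
      Nat.findGreatest_is_greatest (P := fun i => c < beta μ i) (Nat.lt_add_one a) har
    have hne : beta μ (a + 1) ≠ c := fun h => hc (h ▸ beta_mem_betaSet (by omega) har)
    unfold beta at hle hne
    omega
  · have := hμ.eq_zero_of_conj_one_lt (show conj μ 1 < a + 1 by omega)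
    omega

theorem exists_hook_eq_sub (hμ : IsPartition μ) {b c : ℕ} (hb : b ∈ betaSet μ)
    (hcb : c < b) (hc : c ∉ betaSet μ) :
    ∃ i j, IsNode μ i j ∧ hook μ i j = (b : ℤ) - c := by
  obtain ⟨a, ha, har, hca, hac⟩ := hμ.exists_beta_gt_of_notMem hb hcb hc
  obtain ⟨k, hk, hkr, rfl⟩ := mem_betaSet.1 hb
  unfold beta at hca hcb
  have hka : k ≤ a := by
    by_contra! hak
    have := hμ.antitone (Nat.le_add_left 1 a) hak
    omega
  have hj : 1 ≤ c + a + 1 - conj μ 1 := by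
    rcases har.lt_or_eq with har | rfl
    · have := (hμ.le_conj_iff le_rfl (Nat.le_add_left 1 a)).1 har
      omega
    · omega
  have hμa := hμ.antitone hk hka
  have hconj : conj μ (c + a + 1 - conj μ 1) = a := hμ.conj_eq ha hj (by omega) (by omega)
  refine ⟨k, c + a + 1 - conj μ 1, ⟨hk, hj, by omega⟩, ?_⟩
  rw [hook, hconj, beta]
  push_cast [hkr, har, hj, show conj μ 1 ≤ c + a + 1 by omega]
  ring

theorem isCoreBetaSet_betaSet (hμ : IsPartition μ) {e : ℕ} (hcore : IsECore e μ) :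
    IsCoreBetaSet e (betaSet μ) := by
  intro b hb c hcb hc hdvd
  obtain ⟨i, j, hnode, hhook⟩ := hμ.exists_hook_eq_sub hb hcb hc
  refine hcore i j hnode ?_
  rw [hhook, ← Nat.cast_sub hcb.le]
  exact Int.natCast_dvd_natCast.2 hdvd

theorem exists_adjacent_of_twoSingular (hμ : IsPartition μ) (h : TwoSingular μ) :
    ∃ x, x ∈ betaSet μ ∧ x + 1 ∈ betaSet μ := by
  obtain ⟨i, hi, heq, hpos⟩ := h
  have hir : i + 1 ≤ conj μ 1 := (hμ.le_conj_iff le_rfl (by omega)).2 (by omega)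
  refine ⟨beta μ (i + 1), beta_mem_betaSet (by omega) hir, ?_⟩
  convert beta_mem_betaSet (μ := μ) hi (by omega) using 1
  unfold beta
  omega

theorem exists_double_gap_of_twoSingular_conj (hμ : IsPartition μ) (h : TwoSingular (conj μ)) :
    ∃ z w, z ∉ betaSet μ ∧ z + 1 ∉ betaSet μ ∧ w ∈ betaSet μ ∧ z + 1 < w := by
  obtain ⟨i, hi, heq, hpos⟩ := h
  set l := conj μ i
  have hlr : l ≤ conj μ 1 := hμ.conj_antitone le_rfl hi
  have hμl : i + 1 ≤ μ l := (hμ.le_conj_iff (by omega) hpos).1 heq.le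
  have hμl1 : μ (l + 1) < i := by
    by_contra! h
    have := (hμ.le_conj_iff hi (Nat.le_add_left 1 l)).2 h
    omega
  -- rows `l` and `l + 1` differ by at least two, leaving two gaps just above `β_{l+1}`
  have hgap : ∀ y, μ (l + 1) + (conj μ 1 - l) ≤ y → y ≤ μ (l + 1) + (conj μ 1 - l) + 1 →
      y ∉ betaSet μ := by
    rintro y hy1 hy2 hy
    obtain ⟨k, hk, hkr, rfl⟩ := mem_betaSet.1 hy
    unfold beta at hy1 hy2
    rcases le_or_gt k l with hkl | hkl
    · have := hμ.antitone hk hkl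
      omega
    · have := hμ.antitone (Nat.le_add_left 1 l) hkl
      omega
  exact ⟨_, beta μ l, hgap _ le_rfl (by omega), hgap _ (by omega) le_rfl,
    beta_mem_betaSet hpos hlr, by unfold beta; omega⟩

theorem betaUnbroken_betaSet (hμ : IsPartition μ) (hub : ¬ Broken μ) :
    BetaUnbroken (betaSet μ) := by
  intro x z w hx hx1 hz hz1 hw hzw
  by_contra! hxz
  have hxz : x + 1 < z := by
    have : x ≠ z := fun h => hz (h ▸ hx)
    have : x ≠ z + 1 := fun h => hz1 (h ▸ hx)
    have : x + 1 ≠ z := fun h => hz (h ▸ hx1)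
    omega
  obtain ⟨d, hd, hdr, hdx⟩ := mem_betaSet.1 hx1
  obtain ⟨d', hd', hd'r, hd'x⟩ := mem_betaSet.1 hx
  have hdd' : d < d' := (hμ.beta_strictAntiOn.lt_iff_gt ⟨hd', hd'r⟩ ⟨hd, hdr⟩).1 (by omega)
  obtain ⟨a, ha, har, hza, haz⟩ := hμ.exists_beta_gt_of_notMem hw hzw hz1
  have had : a < d := by
    by_contra! hda
    have := hμ.beta_strictAntiOn.antitoneOn ⟨hd, hdr⟩ ⟨ha, har⟩ hda
    omega
  have hne : beta μ (a + 1) ≠ z := fun h => hz (h ▸ beta_mem_betaSet (by omega) (by omega))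
  have hμd := hμ.antitone (Nat.le_add_left 1 d) hdd'
  have hμd1 := hμ.antitone hd (Nat.le_add_right d 1)
  have hpos := (hμ.le_conj_iff le_rfl hd').1 hd'r
  unfold beta at hdx hd'x hza hne
  refine hub ⟨a + 1, d + 1, by omega, by omega, ?_, ?_, by omega⟩ <;>
    simp only [Nat.add_sub_cancel] <;> omega

theorem le_of_unbroken_doublySingular_core (hμ : IsPartition μ) (hub : ¬ Broken μ)
    (h1 : TwoSingular μ) (h2 : TwoSingular (conj μ)) {e : ℕ} (he : 0 < e)
    (hcore : IsECore e μ) : μ 1 ≤ e - 2 ∧ conj μ 1 ≤ e - 2 := by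
  obtain ⟨hcard, hmax⟩ := (hμ.isCoreBetaSet_betaSet hcore).card_le_and_add_one_le he
    hμ.zero_notMem_betaSet (hμ.betaUnbroken_betaSet hub) (hμ.exists_adjacent_of_twoSingular h1)
    (hμ.exists_double_gap_of_twoSingular_conj h2)
  rw [hμ.card_betaSet] at hcard hmax
  obtain ⟨i, hi, -, hpos⟩ := h1
  have hr : 1 ≤ conj μ 1 := (hμ.le_conj_iff le_rfl le_rfl).2 ((hμ.antitone le_rfl hi).trans' hpos)
  have := hmax _ (beta_mem_betaSet le_rfl hr)
  unfold beta at this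
  omega

end IsPartition

/-- An unbroken doubly-singular `2p`-core satisfies `μ_1 ≤ 4p - 6` and `μ'_1 ≤ 4p - 6`. -/
theorem bound_of_unbroken_doublySingular_core (μ : ℕ → ℕ) (p : ℕ)
    (hμ : IsPartition μ) (hp : p.Prime) (hub : ¬ Broken μ)
    (h1 : TwoSingular μ) (h2 : TwoSingular (conj μ))
    (hc : IsECore (2 * p) μ) :
    μ 1 ≤ 4 * p - 6 ∧ conj μ 1 ≤ 4 * p - 6 := by
  have hp2 := hp.two_le
  have := hμ.le_of_unbroken_doublySingular_core hub h1 h2 (by omega) hc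
  omega
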